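/- arXiv:math/0510590 — 3 statements merged into one kernel-verified Lean document; each statement's English description precedes it below -/
import Mathlib

section
/- Let N ⊆ ℝ² satisfy H^α(N) = 0 for some α, let K ⊆ ℝ² be connected with more than one point, and suppose x ∈ N is such that x ∉ closure(K \ N). Then there exists r > 0 with B(x,r) ∩ (K \ N) = ∅ and ∂B(x,r) ∩ N = ∅ and N \ B(x,r) ≠ ∅, yielding a contradiction with connectedness of K; i.e., every point of N is a limit of points of K \ N. -/
open MeasureTheory Filter Metric Set Topology
open scoped ENNReal NNReal

noncomputable section

abbrev Pl := EuclideanSpace ℝ (Fin 2)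

/-- If K ⊆ ℝ² is connected with more than one point and N ⊆ K has one-dimensional
Hausdorff measure zero, then every point of N is a limit of points of K \ N. -/
theorem stmt_1 (K N : Set Pl) (hK : IsConnected K) (hKnt : K.Nontrivial)
    (hNK : N ⊆ K) (hN : μH[1] N = 0) :
    ∀ x ∈ N, x ∈ closure (K \ N) := by
  intro x hxN
  by_contra hx
  -- there is a ball around x missing K \ N
  rw [Metric.mem_closure_iff] at hx
  push_neg at hx
  obtain ⟨r, hr, hball⟩ := hx
  -- another point of K
  obtain ⟨y, hyK, hyx⟩ := hKnt.exists_ne x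
  have hdy : 0 < dist x y := dist_pos.mpr (fun h => hyx h.symm)
  set r0 : ℝ := min r (dist x y) with hr0def
  have hr0 : 0 < r0 := lt_min hr hdy
  -- the image of N under dist x has measure zero
  have hlip : LipschitzWith 1 (dist x) := LipschitzWith.dist_right x
  have himg : volume ((dist x) '' N) = 0 := by
    have := hlip.hausdorffMeasure_image_le (by norm_num : (0:ℝ) ≤ 1) N
    rw [hN, hausdorffMeasure_real] at this
    simpa using le_antisymm (by simpa using this) zero_le
  -- find a good radius s
  have hsub : ¬ (Ioo (0:ℝ) r0 ⊆ (dist x) '' N) := by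
    intro h
    have := measure_mono (μ := volume) h
    rw [himg, Real.volume_Ioo] at this
    simp only [nonpos_iff_eq_zero, ENNReal.ofReal_eq_zero] at this
    linarith
  obtain ⟨s, hs, hsN⟩ := not_subset.mp hsub
  obtain ⟨hs0, hsr0⟩ := hs
  have hsr : s < r := lt_of_lt_of_le hsr0 (min_le_left _ _)
  have hsy : s < dist x y := lt_of_lt_of_le hsr0 (min_le_right _ _)
  -- K ∩ ball x r ⊆ N
  have hKB : ∀ z ∈ K, dist x z < r → z ∈ N := by
    intro z hzK hz
    by_contra hzN
    have := hball z ⟨hzK, hzN⟩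
    linarith
  -- no point of K on the sphere of radius s
  have hsphere : ∀ z ∈ K, dist x z ≠ s := by
    intro z hzK hzs
    have hzN : z ∈ N := hKB z hzK (hzs ▸ hsr)
    exact hsN ⟨z, hzN, hzs⟩
  -- disconnect K
  set U : Set Pl := ball x s
  set V : Set Pl := (closedBall x s)ᶜ
  have hUV : K ⊆ U ∪ V := by
    intro z hzK
    rcases lt_trichotomy (dist x z) s with h | h | h
    · exact Or.inl (by rwa [mem_ball, dist_comm])
    · exact absurd h (hsphere z hzK)
    · exact Or.inr (by simp [V, mem_closedBall, dist_comm]; linarith)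
  have hdisj : U ∩ V = ∅ := by
    apply eq_empty_of_forall_notMem
    intro z ⟨hz1, hz2⟩
    exact hz2 (ball_subset_closedBall hz1)
  have hxU : x ∈ K ∩ U := ⟨hNK hxN, mem_ball_self hs0⟩
  have hyV : y ∈ K ∩ V := ⟨hyK, by simp [V, mem_closedBall, dist_comm]; linarith⟩
  obtain ⟨z, hz⟩ := hK.isPreconnected U V isOpen_ball Metric.isClosed_closedBall.isOpen_compl
    hUV ⟨x, hxU⟩ ⟨y, hyV⟩
  rw [hdisj, inter_empty] at hz
  exact hz
end
end

section
/- Let C ⊆ ℝ be compact with Lebesgue measure zero, let C_n := {y ∈ ℝ : dist(y,C) ≤ 1/n}, and define T_n(y) := ∫₀^y 1_{ℝ∖C_n}(s) ds. Then each T_n is 1-Lipschitz with T_n' = 0 a.e. on C_n, T_n converges pointwise to the identity on ℝ, and T_n'(y) → 1 for a.e. y ∈ ℝ. -/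
open MeasureTheory Filter Metric Set Topology
open scoped ENNReal NNReal

noncomputable section

private lemma aux_intInt {A : Set ℝ} (hA : MeasurableSet A) (a b : ℝ) :
    IntervalIntegrable (A.indicator (fun _ => (1:ℝ))) volume a b := by
  constructor <;>
  · rw [IntegrableOn, integrable_indicator_iff hA]
    refine integrableOn_const (LT.lt.ne ?_) (by simp)
    rw [Measure.restrict_apply hA]
    exact lt_of_le_of_lt (measure_mono Set.inter_subset_right) measure_Ioc_lt_top

private lemma aux_hasDerivAt {A : Set ℝ} (hA : MeasurableSet A) {y c ε : ℝ} (hε : 0 < ε)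
    (hc : ∀ s ∈ Metric.ball y ε, A.indicator (fun _ => (1:ℝ)) s = c) :
    HasDerivAt (fun z => ∫ s in (0:ℝ)..z, A.indicator (fun _ => (1:ℝ)) s) c y := by
  set f := A.indicator (fun _ => (1:ℝ)) with hf
  have key : ∀ z ∈ Metric.ball y ε,
      (∫ s in (0:ℝ)..z, f s) = (∫ s in (0:ℝ)..y, f s) + c * (z - y) := by
    intro z hz
    have hsub : Set.uIcc y z ⊆ Metric.ball y ε :=
      ((convex_ball y ε).ordConnected).uIcc_subset (mem_ball_self hε) hz
    have h1 : (∫ s in (0:ℝ)..z, f s) - (∫ s in (0:ℝ)..y, f s) = ∫ s in y..z, f s :=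
      intervalIntegral.integral_interval_sub_left (aux_intInt hA 0 z) (aux_intInt hA 0 y)
    have h2 : (∫ s in y..z, f s) = ∫ _s in y..z, c :=
      intervalIntegral.integral_congr fun s hs => hc s (hsub hs)
    rw [intervalIntegral.integral_const, smul_eq_mul] at h2
    linarith [h1, h2]
  have haff : HasDerivAt (fun z => (∫ s in (0:ℝ)..y, f s) + c * (z - y)) c y := by
    have := (((hasDerivAt_id y).sub_const y).const_mul c).const_add
      (∫ s in (0:ℝ)..y, f s)
    simpa using this
  refine haff.congr_of_eventuallyEq ?_
  filter_upwards [Metric.ball_mem_nhds y hε] with z hz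
  exact key z hz

private lemma aux_countable_sep {A : Set ℝ} {r : ℝ} (hr : 0 < r)
    (h : ∀ y ∈ A, ∀ z ∈ A, y ≠ z → r ≤ |y - z|) : A.Countable := by
  refine Set.countable_of_injective_of_countable_image
    (f := fun y => ⌊y / r⌋) ?_ (Set.to_countable _)
  intro y hy z hz hyz
  by_contra hne
  have hsep := h y hy z hz hne
  have h1 : (⌊y / r⌋ : ℝ) ≤ y / r := Int.floor_le _
  have h2 : y / r < ⌊y / r⌋ + 1 := Int.lt_floor_add_one _
  have h3 : (⌊z / r⌋ : ℝ) ≤ z / r := Int.floor_le _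
  have h4 : z / r < ⌊z / r⌋ + 1 := Int.lt_floor_add_one _
  simp only at hyz
  rw [hyz] at h1 h2
  have habs : |y / r - z / r| < 1 := by
    rw [abs_sub_lt_iff]; constructor <;> linarith
  have hlt : |y - z| < r := by
    have h5 : |y - z| / r < 1 := by rwa [← sub_div, abs_div, abs_of_pos hr] at habs
    calc |y - z| = |y - z| / r * r := by field_simp
    _ < 1 * r := mul_lt_mul_of_pos_right h5 hr
    _ = r := one_mul r
  linarith

private lemma aux_sep {r y z : ℝ} (hr : 0 < r) (h1 : r ≤ |z - y - r|)
    (h2 : r ≤ |z - y + r|) (hne : y ≠ z) : r ≤ |y - z| := by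
  have hd : y - z ≠ 0 := sub_ne_zero.2 hne
  rcases abs_cases (z - y - r) with ⟨e1, _⟩ | ⟨e1, _⟩ <;>
  rcases abs_cases (z - y + r) with ⟨e2, _⟩ | ⟨e2, _⟩ <;>
  rcases abs_cases (y - z) with ⟨e3, _⟩ | ⟨e3, _⟩ <;>
  rcases lt_or_gt_of_ne hd with hd' | hd' <;>
  linarith

/-- The "sphere" `cthickening r C \ thickening r C` is Lebesgue-null for `r > 0`. -/
private lemma aux_null_sphere (C : Set ℝ) (hC : IsCompact C) {r : ℝ} (hr : 0 < r) :
    volume (Metric.cthickening r C \ Metric.thickening r C) = 0 := by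
  set A : Set ℝ := {y | y + r ∈ C ∧ ∀ c ∈ C, r ≤ dist y c} with hA
  set B : Set ℝ := {y | y - r ∈ C ∧ ∀ c ∈ C, r ≤ dist y c} with hB
  have hfar : ∀ y : ℝ, EMetric.infEdist y C = ENNReal.ofReal r → ∀ c ∈ C, r ≤ dist y c := by
    intro y hy c hc
    have : ENNReal.ofReal r ≤ edist y c := hy ▸ EMetric.infEdist_le_edist_of_mem hc
    rw [edist_dist] at this
    exact (ENNReal.ofReal_le_ofReal_iff dist_nonneg).1 this
  have hsub : Metric.cthickening r C \ Metric.thickening r C ⊆ A ∪ B := by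
    rintro y ⟨hy1, hy2⟩
    have hle : EMetric.infEdist y C ≤ ENNReal.ofReal r := Metric.mem_cthickening_iff.1 hy1
    have hge : ENNReal.ofReal r ≤ EMetric.infEdist y C := by
      by_contra h
      exact hy2 (Metric.mem_thickening_iff_infEdist_lt.2 (lt_of_not_ge h))
    have heq : Metric.infEDist y C = ENNReal.ofReal r := le_antisymm hle hge
    have hne : C.Nonempty := by
      by_contra h
      rw [Set.not_nonempty_iff_eq_empty] at h
      rw [h, Metric.infEDist_empty] at heq
      exact ENNReal.ofReal_ne_top heq.symm
    obtain ⟨c, hcC, hcd⟩ := hC.exists_infEdist_eq_edist hne y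
    have hdist : dist y c = r := by
      rw [heq, edist_dist] at hcd
      exact (ENNReal.ofReal_eq_ofReal_iff dist_nonneg hr.le).1 hcd.symm
    have habs : |y - c| = r := by rwa [Real.dist_eq] at hdist
    rcases (abs_eq hr.le).1 habs with h | h
    · right
      refine ⟨?_, hfar y heq⟩
      show y - r ∈ C
      rwa [show y - r = c by linarith]
    · left
      refine ⟨?_, hfar y heq⟩
      show y + r ∈ C
      rwa [show y + r = c by linarith]
  have hAc : A.Countable := by
    refine aux_countable_sep hr fun y hy z hz hne => ?_
    have h1 : r ≤ dist z (y + r) := hz.2 _ hy.1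
    have h2 : r ≤ dist y (z + r) := hy.2 _ hz.1
    rw [Real.dist_eq] at h1 h2
    refine aux_sep hr (by rwa [show z - (y+r) = z - y - r by ring] at h1) ?_ hne
    rwa [show y - (z+r) = -(z - y + r) by ring, abs_neg] at h2
  have hBc : B.Countable := by
    refine aux_countable_sep hr fun y hy z hz hne => ?_
    have h1 : r ≤ dist z (y - r) := hz.2 _ hy.1
    have h2 : r ≤ dist y (z - r) := hy.2 _ hz.1
    rw [Real.dist_eq] at h1 h2
    refine aux_sep hr ?_ (by rwa [show z - (y-r) = z - y + r by ring] at h1) hne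
    rwa [show y - (z-r) = -(z - y - r) by ring, abs_neg] at h2
  exact measure_mono_null hsub (Set.Countable.measure_zero (hAc.union hBc) _)

/-- Properties of the truncation maps `T_n(y) = ∫₀^y 1_{ℝ∖C_n}(s) ds` associated with a
compact Lebesgue-null set C ⊆ ℝ, where `C_n = {y : dist(y,C) ≤ 1/n}`: each `T_n` is
1-Lipschitz, has derivative 0 a.e. on `C_n`, `T_n → id` pointwise, and `T_n' → 1` a.e. -/
theorem stmt_5 (C : Set ℝ) (hC : IsCompact C) (hC0 : volume C = 0)
    (Cn : ℕ → Set ℝ) (hCn : ∀ n, Cn n = Metric.cthickening (1 / (n : ℝ)) C)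
    (T : ℕ → ℝ → ℝ)
    (hT : ∀ n y, T n y = ∫ s in (0:ℝ)..y, ((Cn n)ᶜ).indicator (fun _ => (1:ℝ)) s) :
    (∀ n, LipschitzWith 1 (T n)) ∧
    (∀ n, ∀ᵐ y ∂(volume.restrict (Cn n)), HasDerivAt (T n) 0 y) ∧
    (∀ y : ℝ, Tendsto (fun n => T n y) atTop (𝓝 y)) ∧
    (∀ᵐ y : ℝ, Tendsto (fun n => deriv (T n) y) atTop (𝓝 1)) := by
  have hCnclosed : ∀ n, IsClosed (Cn n) := fun n => by
    rw [hCn]; exact Metric.isClosed_cthickening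
  have hCnmeas : ∀ n, MeasurableSet (Cn n) := fun n => (hCnclosed n).measurableSet
  have hmeasc : ∀ n, MeasurableSet ((Cn n)ᶜ) := fun n => (hCnmeas n).compl
  have hTfun : ∀ n, T n = fun z => ∫ s in (0:ℝ)..z, ((Cn n)ᶜ).indicator (fun _ => (1:ℝ)) s :=
    fun n => funext (hT n)
  have hnormle : ∀ n s, ‖((Cn n)ᶜ).indicator (fun _ => (1:ℝ)) s‖ ≤ 1 := by
    intro n s
    by_cases h : s ∈ (Cn n)ᶜ <;> simp [h]
  have hvolCn : ∀ n, volume (Cn n) ≠ ⊤ := fun n => by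
    rw [hCn]; exact hC.isBounded.cthickening.measure_lt_top.ne
  -- Part 1: Lipschitz
  have part1 : ∀ n, LipschitzWith 1 (T n) := by
    intro n
    refine LipschitzWith.of_dist_le_mul fun x y => ?_
    rw [Real.dist_eq, Real.dist_eq, hT n x, hT n y,
      intervalIntegral.integral_interval_sub_left (aux_intInt (hmeasc n) 0 x)
        (aux_intInt (hmeasc n) 0 y)]
    calc ‖∫ s in y..x, ((Cn n)ᶜ).indicator (fun _ => (1:ℝ)) s‖
        ≤ 1 * |x - y| := intervalIntegral.norm_integral_le_of_norm_le_const
          fun s _ => hnormle n s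
      _ = ↑(1:ℝ≥0) * |x - y| := by norm_num
  -- Part 2: derivative 0 a.e. on Cn
  have part2 : ∀ n, ∀ᵐ y ∂(volume.restrict (Cn n)), HasDerivAt (T n) 0 y := by
    intro n
    rcases Nat.eq_zero_or_pos n with hn | hn
    · have h0 : volume (Cn 0) = 0 := by
        rw [hCn]
        simp only [Nat.cast_zero, div_zero, Metric.cthickening_zero,
          hC.isClosed.closure_eq]
        exact hC0
      rw [hn, Measure.restrict_eq_zero.2 h0]
      simp
    · have hrpos : (0:ℝ) < 1 / n := by positivity
      have hnull : volume (Cn n \ Metric.thickening (1/(n:ℝ)) C) = 0 := by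
        rw [hCn]; exact aux_null_sphere C hC hrpos
      rw [ae_restrict_iff' (hCnmeas n)]
      filter_upwards [measure_eq_zero_iff_ae_notMem.1 hnull] with y hy hyCn
      have hythick : y ∈ Metric.thickening (1/(n:ℝ)) C := by
        by_contra h
        exact hy ⟨hyCn, h⟩
      obtain ⟨ε, hε, hball⟩ := Metric.isOpen_iff.1 Metric.isOpen_thickening y hythick
      rw [hTfun n]
      refine aux_hasDerivAt (hmeasc n) hε fun s hs => ?_
      have : s ∈ Cn n := by
        rw [hCn]
        exact Metric.thickening_subset_cthickening _ _ (hball hs)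
      simp [Set.indicator_apply, this]
  -- measure of Cn tends to 0
  have hvol0 : Tendsto (fun n => (volume (Cn n)).toReal) atTop (𝓝 0) := by
    have h1 : Tendsto (fun n : ℕ => 1 / (n:ℝ)) atTop (𝓝 0) :=
      tendsto_one_div_atTop_nhds_zero_nat
    have h2 : Tendsto (fun n => volume (Cn n)) atTop (𝓝 0) := by
      have := (tendsto_measure_cthickening_of_isCompact (μ := volume) hC).comp h1
      rw [hC0] at this
      simpa only [Function.comp_def, ← hCn] using this
    have := (ENNReal.tendsto_toReal (a := 0) (by simp)).comp h2
    simpa [Function.comp_def] using this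
  -- Part 3: pointwise convergence to identity
  have part3 : ∀ y : ℝ, Tendsto (fun n => T n y) atTop (𝓝 y) := by
    intro y
    rw [tendsto_iff_dist_tendsto_zero]
    have hbound : ∀ n, dist (T n y) y ≤ (volume (Cn n)).toReal := by
      intro n
      have hsplit : T n y = y - ∫ s in (0:ℝ)..y, (Cn n).indicator (fun _ => (1:ℝ)) s := by
        rw [hT n y]
        have : ∀ s : ℝ, ((Cn n)ᶜ).indicator (fun _ => (1:ℝ)) s
            = 1 - (Cn n).indicator (fun _ => (1:ℝ)) s := by
          intro s
          by_cases h : s ∈ Cn n <;> simp [Set.indicator_apply, h]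
        rw [intervalIntegral.integral_congr (g := fun s =>
          1 - (Cn n).indicator (fun _ => (1:ℝ)) s) (fun s _ => this s),
          intervalIntegral.integral_sub intervalIntegrable_const
            (aux_intInt (hCnmeas n) 0 y)]
        simp
      rw [Real.dist_eq, hsplit]
      have h1 : |y - (∫ s in (0:ℝ)..y, (Cn n).indicator (fun _ => (1:ℝ)) s) - y|
          = ‖∫ s in (0:ℝ)..y, (Cn n).indicator (fun _ => (1:ℝ)) s‖ := by
        rw [Real.norm_eq_abs, show y - (∫ s in (0:ℝ)..y, (Cn n).indicator (fun _ => (1:ℝ)) s) - y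
          = -(∫ s in (0:ℝ)..y, (Cn n).indicator (fun _ => (1:ℝ)) s) by ring, abs_neg]
      rw [h1]
      calc ‖∫ s in (0:ℝ)..y, (Cn n).indicator (fun _ => (1:ℝ)) s‖
          ≤ ∫ s in Set.uIoc 0 y, ‖(Cn n).indicator (fun _ => (1:ℝ)) s‖ :=
            intervalIntegral.norm_integral_le_integral_norm_uIoc
        _ = ∫ s in Set.uIoc 0 y, (Cn n).indicator (fun _ => (1:ℝ)) s := by
            refine integral_congr_ae (Eventually.of_forall fun s => ?_)
            by_cases h : s ∈ Cn n <;> simp [h]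
        _ = ((volume.restrict (Set.uIoc 0 y)) (Cn n)).toReal := by
            rw [integral_indicator (hCnmeas n)]
            simp
            rfl
        _ ≤ (volume (Cn n)).toReal := ENNReal.toReal_mono (hvolCn n)
              (Measure.restrict_apply_le _ _)
    exact squeeze_zero (fun n => dist_nonneg) hbound hvol0
  refine ⟨part1, part2, part3, ?_⟩
  -- Part 4: deriv tends to 1 a.e.
  have hae : ∀ᵐ y : ℝ, y ∉ C := measure_eq_zero_iff_ae_notMem.1 hC0
  filter_upwards [hae] with y hy
  have hyc : y ∉ closure C := by rwa [hC.isClosed.closure_eq]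
  have hev : ∀ᶠ n in atTop, y ∉ Cn n := by
    have := (Metric.eventually_notMem_cthickening_of_infEdist_pos hyc).filter_mono
      (le_refl _)
    have h2 := tendsto_one_div_atTop_nhds_zero_nat.eventually
      (Metric.eventually_notMem_cthickening_of_infEdist_pos hyc)
    filter_upwards [h2] with n hn
    rw [hCn]; exact hn
  refine Tendsto.congr' ?_ tendsto_const_nhds
  filter_upwards [hev] with n hn
  obtain ⟨ε, hε, hball⟩ := Metric.isOpen_iff.1 (hCnclosed n).isOpen_compl y hn
  have hd : HasDerivAt (T n) 1 y := by
    rw [hTfun n]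
    refine aux_hasDerivAt (hmeasc n) hε fun s hs => ?_
    simp [Set.indicator_apply, hball hs]
  exact (hd.deriv).symm
end
end

section
/- Let Ω ⊆ ℝ² be open and bounded, and let Ω_n ⊆ ℝ² be open, uniformly bounded, with Ω_n → Ω in the Hausdorff complementary topology and meas(Ω_n) → meas(Ω). Then 1_{Ω_n} → 1_Ω strongly in L¹(ℝ²). -/
open MeasureTheory Filter Metric Set Topology
open scoped ENNReal NNReal

noncomputable section

/-- `G` is the weak (distributional) gradient of `u` on the open set `A`. -/
def HasWeakGradient (A : Set Pl) (u : Pl → ℝ) (G : Pl → Pl) : Prop :=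
  ∀ φ : Pl → ℝ, ContDiff ℝ (⊤ : ℕ∞) φ → HasCompactSupport φ → tsupport φ ⊆ A →
    ∫ x in A, u x • gradient φ x = - ∫ x in A, φ x • G x

/-- `u ∈ W^{1,p}(A)` with weak gradient `G`. -/
def MemW1p (A : Set Pl) (p : ℝ≥0∞) (u : Pl → ℝ) (G : Pl → Pl) : Prop :=
  MemLp u p (volume.restrict A) ∧ MemLp G p (volume.restrict A) ∧ HasWeakGradient A u G
/-- Convergence of open sets in the Hausdorff complementary topology: for every closed
ball B, B ∩ Ωₙᶜ → B ∩ Ωᶜ in the Hausdorff metric on compact sets. -/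
def HCC (Ωn : ℕ → Set Pl) (Ω : Set Pl) : Prop :=
  ∀ (x : Pl) (r : ℝ), Tendsto
    (fun n => Metric.hausdorffDist (Metric.closedBall x r ∩ (Ωn n)ᶜ)
      (Metric.closedBall x r ∩ Ωᶜ)) atTop (𝓝 0)

/-- Compact absorption: every compact subset of `Ω` is eventually inside `Ωn n`. -/
lemma compact_absorb (Ω : Set Pl) (hΩ : IsOpen Ω) (hΩb : Bornology.IsBounded Ω)
    (Ωn : ℕ → Set Pl) (hH : HCC Ωn Ω) (K : Set Pl) (hK : IsCompact K) (hKΩ : K ⊆ Ω) :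
    ∀ᶠ n in atTop, K ⊆ Ωn n := by
  obtain ⟨δ, hδ, hthick⟩ := hK.exists_thickening_subset_open hΩ hKΩ
  -- choose a big radius r with K ⊆ closedBall 0 r and Ω ⊆ ball 0 r
  obtain ⟨rK, hrK⟩ := hK.isBounded.subset_closedBall 0
  obtain ⟨rΩ, hrΩ⟩ := hΩb.subset_closedBall 0
  set r : ℝ := |rK| + |rΩ| + 1 with hr
  have hrpos : 0 < r := by positivity
  have hKr : rK ≤ r := by
    have := le_abs_self rK; have := abs_nonneg rΩ; simp only [hr]; linarith
  have hΩr : rΩ < r := by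
    have := le_abs_self rΩ; have := abs_nonneg rK; simp only [hr]; linarith
  have hnorm : ‖r • (EuclideanSpace.single (0 : Fin 2) (1:ℝ))‖ = r := by
    rw [norm_smul, EuclideanSpace.norm_single]
    simp [abs_of_pos hrpos]
  -- a point outside Ω in the ball: of norm r
  have hptex : (Metric.closedBall (0:Pl) r ∩ Ωᶜ).Nonempty := by
    refine ⟨r • (EuclideanSpace.single (0 : Fin 2) (1:ℝ)), ?_, ?_⟩
    · rw [mem_closedBall, dist_eq_norm, sub_zero, hnorm]
    · intro hmem
      have h2 := hrΩ hmem
      rw [mem_closedBall, dist_eq_norm, sub_zero, hnorm] at h2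
      linarith
  have hev := (hH 0 r).eventually (eventually_lt_nhds (by positivity : (0:ℝ) < δ))
  filter_upwards [hev] with n hn x hx
  by_contra hxn
  have hxB : x ∈ Metric.closedBall (0:Pl) r ∩ (Ωn n)ᶜ := ⟨by
      have := hrK hx
      exact closedBall_subset_closedBall hKr this, hxn⟩
  have hfin : EMetric.hausdorffEdist (Metric.closedBall (0:Pl) r ∩ (Ωn n)ᶜ)
      (Metric.closedBall (0:Pl) r ∩ Ωᶜ) ≠ ⊤ :=
    Metric.hausdorffEdist_ne_top_of_nonempty_of_bounded ⟨x, hxB⟩ hptex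
      ((Metric.isBounded_closedBall).subset inter_subset_left)
      ((Metric.isBounded_closedBall).subset inter_subset_left)
  obtain ⟨y, hy, hxy⟩ := Metric.exists_dist_lt_of_hausdorffDist_lt hxB hn hfin
  exact hy.2 (hthick (Metric.mem_thickening_iff.mpr ⟨x, hx, by rwa [dist_comm]⟩))

/-- If uniformly bounded open sets Ωₙ converge to the bounded open set Ω in the Hausdorff
complementary topology and meas(Ωₙ) → meas(Ω), then 1_{Ωₙ} → 1_Ω strongly in L¹(ℝ²). -/
theorem stmt_7 (Ω : Set Pl) (hΩ : IsOpen Ω) (hΩb : Bornology.IsBounded Ω)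
    (Ωn : ℕ → Set Pl) (hop : ∀ n, IsOpen (Ωn n))
    (R : ℝ) (hub : ∀ n, Ωn n ⊆ Metric.ball 0 R)
    (hH : HCC Ωn Ω)
    (hm : Tendsto (fun n => volume (Ωn n)) atTop (𝓝 (volume Ω))) :
    Tendsto (fun n => ∫ x : Pl, |(Ωn n).indicator (fun _ => (1:ℝ)) x
      - Ω.indicator (fun _ => (1:ℝ)) x|) atTop (𝓝 0) := by
  have hΩm : MeasurableSet Ω := hΩ.measurableSet
  have hΩfin : volume Ω ≠ ⊤ := hΩb.measure_lt_top.ne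
  have hΩnfin : ∀ n, volume (Ωn n) ≠ ⊤ := fun n =>
    ((measure_mono (hub n)).trans_lt measure_ball_lt_top).ne
  -- Step 1: volume (Ω \ Ωn n) → 0
  have hb : Tendsto (fun n => volume (Ω \ Ωn n)) atTop (𝓝 0) := by
    rw [ENNReal.tendsto_nhds_zero]
    intro ε hε
    obtain ⟨K, hKΩ, hKc, hKlt⟩ := hΩm.exists_isCompact_lt_add hΩfin (ne_of_gt hε)
    filter_upwards [compact_absorb Ω hΩ hΩb Ωn hH K hKc hKΩ] with n hn
    calc volume (Ω \ Ωn n) ≤ volume (Ω \ K) := measure_mono (diff_subset_diff_right hn)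
      _ ≤ ε := by
          rw [measure_diff hKΩ hKc.measurableSet.nullMeasurableSet
            hKc.measure_lt_top.ne]
          exact tsub_le_iff_right.mpr (by rw [add_comm]; exact hKlt.le)
  -- Step 2: volume (Ωn n \ Ω) → 0
  have ha : Tendsto (fun n => volume (Ωn n \ Ω)) atTop (𝓝 0) := by
    have key : ∀ n, volume (Ωn n \ Ω) = (volume (Ω \ Ωn n) + volume (Ωn n)) - volume Ω := by
      intro n
      have h1 : volume (Ωn n \ Ω) + volume Ω = volume (Ω \ Ωn n) + volume (Ωn n) := by
        rw [← measure_union disjoint_sdiff_left hΩm, Set.diff_union_self,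
          ← measure_union disjoint_sdiff_left (hop n).measurableSet, Set.diff_union_self,
          Set.union_comm]
      exact ENNReal.eq_sub_of_add_eq hΩfin h1
    have := (ENNReal.Tendsto.sub (hb.add hm) (tendsto_const_nhds (x := volume Ω))
      (Or.inr hΩfin))
    simp only [zero_add, tsub_self] at this
    simpa only [← key] using this
  -- Step 3: combine
  have hsum : Tendsto (fun n => volume (Ωn n \ Ω) + volume (Ω \ Ωn n)) atTop (𝓝 0) := by
    simpa using ha.add hb
  have hreal : Tendsto (fun n => (volume (Ωn n \ Ω) + volume (Ω \ Ωn n)).toReal) atTop (𝓝 0) := by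
    exact (ENNReal.tendsto_toReal (by simp)).comp hsum
  convert hreal using 2 with n
  have hptwise : (fun x : Pl => |(Ωn n).indicator (fun _ => (1:ℝ)) x
      - Ω.indicator (fun _ => (1:ℝ)) x|)
      = ((Ωn n \ Ω) ∪ (Ω \ Ωn n)).indicator (fun _ => (1:ℝ)) := by
    funext x
    by_cases h1 : x ∈ Ωn n <;> by_cases h2 : x ∈ Ω <;>
      simp [Set.indicator, h1, h2]
  rw [hptwise, integral_indicator_const (1:ℝ)
    (((hop n).measurableSet.diff hΩm).union (hΩm.diff (hop n).measurableSet))]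
  rw [measureReal_def, measure_union (disjoint_sdiff_sdiff) (hΩm.diff (hop n).measurableSet)]
  simp
end
end
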